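/- Convolution of uncolored copies: let d ≥ 1, let s ∈ Z_{≥0}^d be the constant vector with all entries equal to s ≥ 1, let n_i ≥ s and r_i ≥ s for all i. If H is an (uncolored) copy of the hypergraph ⊗_s(r) = ⊗_{i∈[d]} K^s_{[r_i]×{i}} inside ⊗_s(n) = ⊗_{i∈[d]} K^s_{[n_i]×{i}}, then there is a permutation f of [d] such that H is a colored copy of ⊗_s(r∘f⁻¹) (the pattern with part sizes permuted by f), where colors are the part indices of ⊗_s(n). -/

import Mathlib

open Finset

/-- The edge ⋃_i A_i × {i} of a layered hypergraph on vertex set `Fin d × ℕ`. -/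
def edgeOf {d : ℕ} (A : Fin d → Finset ℕ) : Finset (Fin d × ℕ) :=
  Finset.univ.biUnion fun i => (A i).image fun x => (i, x)

/-- The edge set of the colored hypergraph ⊗_S(n) = ⋃_{s ∈ S} ⊗_{i} K^{s_i}_{[n_i]×{i}}:
edges are unions over i of an s_i-element subset of [n_i] × {i}, for some s ∈ S.
The color of a vertex is its part index (first coordinate). -/
def tensorEdges (d : ℕ) (S : Finset (Fin d → ℕ)) (n : Fin d → ℕ) :
    Set (Finset (Fin d × ℕ)) :=
  {W | ∃ s ∈ S, ∃ A : Fin d → Finset ℕ,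
    (∀ i, A i ⊆ Icc 1 (n i) ∧ (A i).card = s i) ∧ W = edgeOf A}

/-- The edge set of the colored copy of ⊗_S(r) with parts `R_ i ⊆ [n_i]` (of sizes r_i):
all sets meeting the i-th part in s_i vertices, for some s ∈ S. -/
def copyEdges (d : ℕ) (S : Finset (Fin d → ℕ)) (R_ : Fin d → Finset ℕ) :
    Set (Finset (Fin d × ℕ)) :=
  {W | ∃ s ∈ S, ∃ A : Fin d → Finset ℕ,
    (∀ i, A i ⊆ R_ i ∧ (A i).card = s i) ∧ W = edgeOf A}

/-- `F` is weakly saturated in the colored hypergraph ⊗_S(n) with respect to the family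
of colored patterns {⊗_S(r) : r ∈ R}: the missing edges can be ordered so that each
added edge belongs to a colored copy of some ⊗_S(r) (r ∈ R) all of whose edges are
present after the addition.  A colored copy is determined by its parts
`R_ i ⊆ [n_i]` of sizes `r i` (colors, i.e. part indices, must match). -/
def CWeaklySat (d : ℕ) (S R : Finset (Fin d → ℕ)) (n : Fin d → ℕ)
    (F : Set (Finset (Fin d × ℕ))) : Prop :=
  F ⊆ tensorEdges d S n ∧ ∃ l : List (Finset (Fin d × ℕ)), l.Nodup ∧
    {e | e ∈ l} = tensorEdges d S n \ F ∧
    ∀ j : Fin l.length, ∃ r ∈ R, ∃ R_ : Fin d → Finset ℕ,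
      (∀ i, R_ i ⊆ Icc 1 (n i) ∧ (R_ i).card = r i) ∧
      l.get j ∈ copyEdges d S R_ ∧
      copyEdges d S R_ ⊆ F ∪ {e | e ∈ l.take (j.1 + 1)}

/-- The colored weak saturation number c-wsat(⊗_S(n), ⊗_S(R)). -/
noncomputable def cwsat (d : ℕ) (S R : Finset (Fin d → ℕ)) (n : Fin d → ℕ) : ℕ :=
  sInf {k : ℕ | ∃ F : Set (Finset (Fin d × ℕ)), CWeaklySat d S R n F ∧ F.ncard = k}

/-- Number of vertices `(j,x)`, `x ∈ [m]`, whose `φ`-image has color `i`. -/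
def colCnt {d : ℕ} (φ : Fin d × ℕ → Fin d × ℕ) (m : ℕ) (j i : Fin d) : ℕ :=
  ((Finset.Icc 1 m).filter (fun x => (φ (j, x)).1 = i)).card

lemma mem_edgeOf {d : ℕ} {A : Fin d → Finset ℕ} {v : Fin d × ℕ} :
    v ∈ edgeOf A ↔ v.2 ∈ A v.1 := by
  obtain ⟨a, b⟩ := v
  simp only [edgeOf, Finset.mem_biUnion, Finset.mem_univ, true_and, Finset.mem_image]
  constructor
  · rintro ⟨i, x, hx, h⟩
    obtain ⟨rfl, rfl⟩ := Prod.mk.injEq .. ▸ h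
    exact hx
  · intro h
    exact ⟨a, b, h, rfl⟩

lemma edgeOf_subset {d : ℕ} {A B : Fin d → Finset ℕ} (h : ∀ i, A i ⊆ B i) :
    edgeOf A ⊆ edgeOf B := fun v hv => mem_edgeOf.2 (h v.1 (mem_edgeOf.1 hv))

lemma filter_edgeOf {d : ℕ} (A : Fin d → Finset ℕ) (i : Fin d) :
    (edgeOf A).filter (fun v => v.1 = i) = (A i).image (fun x => (i, x)) := by
  ext ⟨a, b⟩
  simp only [Finset.mem_filter, mem_edgeOf, Finset.mem_image]
  constructor
  · rintro ⟨h1, rfl⟩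
    exact ⟨b, h1, rfl⟩
  · rintro ⟨x, hx, h⟩
    obtain ⟨rfl, rfl⟩ := Prod.mk.injEq .. ▸ h
    exact ⟨hx, rfl⟩

lemma count_image_edge {d : ℕ} {r : Fin d → ℕ} {φ : Fin d × ℕ → Fin d × ℕ}
    (hinj : Set.InjOn φ {v : Fin d × ℕ | v.2 ∈ Icc 1 (r v.1)})
    (A : Fin d → Finset ℕ) (hA : ∀ j, A j ⊆ Icc 1 (r j)) (i : Fin d) :
    (((edgeOf A).image φ).filter (fun v => v.1 = i)).card
      = ∑ j, ((A j).filter (fun x => (φ (j, x)).1 = i)).card := by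
  classical
  have hsub : Set.InjOn φ ((edgeOf A).filter (fun v => (φ v).1 = i) : Finset (Fin d × ℕ)) := by
    refine hinj.mono ?_
    intro v hv
    have hv' : v ∈ edgeOf A := Finset.filter_subset _ _ (Finset.mem_coe.1 hv)
    exact hA v.1 (mem_edgeOf.1 hv')
  rw [Finset.filter_image, Finset.card_image_of_injOn hsub]
  unfold edgeOf
  rw [Finset.filter_biUnion]
  have hdisj : ∀ x ∈ (univ : Finset (Fin d)), ∀ y ∈ (univ : Finset (Fin d)), x ≠ y →
      Disjoint (((A x).image fun t => (x, t)).filter (fun v => (φ v).1 = i))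
        (((A y).image fun t => (y, t)).filter (fun v => (φ v).1 = i)) := by
    intro x _ y _ hxy
    rw [Finset.disjoint_left]
    intro v hvx hvy
    have h1 := (Finset.mem_image.1 (Finset.filter_subset _ _ hvx))
    have h2 := (Finset.mem_image.1 (Finset.filter_subset _ _ hvy))
    obtain ⟨t1, _, rfl⟩ := h1
    obtain ⟨t2, _, h⟩ := h2
    exact hxy ((Prod.mk.injEq .. ▸ h.symm).1)
  rw [Finset.card_biUnion hdisj]
  refine Finset.sum_congr rfl fun j _ => ?_
  rw [Finset.filter_image, Finset.card_image_of_injective _ (fun a b h => (Prod.mk.injEq .. ▸ h).2)]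

lemma aux_exchange {d s : ℕ} {r : Fin d → ℕ} {φ : Fin d × ℕ → Fin d × ℕ}
    (hr : ∀ i, s ≤ r i)
    (hedge : ∀ A : Fin d → Finset ℕ, (∀ j, A j ⊆ Icc 1 (r j) ∧ (A j).card = s) →
      ∀ i, ∑ j, ((A j).filter (fun x => (φ (j, x)).1 = i)).card = s)
    (j : Fin d) (S : Finset ℕ) (hS : S ⊆ Icc 1 (r j)) (hScard : S.card = s) (i : Fin d) :
    (S.filter (fun x => (φ (j, x)).1 = i)).card = colCnt φ s j i := by
  classical
  have hIccsub : ∀ k : Fin d, Icc 1 s ⊆ Icc 1 (r k) :=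
    fun k => Finset.Icc_subset_Icc le_rfl (hr k)
  have hIcccard : (Icc 1 s).card = s := by rw [Nat.card_Icc]; omega
  set A : Fin d → Finset ℕ := Function.update (fun _ => Icc 1 s) j S with hAdef
  have hAj : A j = S := by simp [hAdef]
  have hAk : ∀ k, k ≠ j → A k = Icc 1 s := fun k hk => by simp [hAdef, Function.update_of_ne hk]
  have h1 := hedge A (fun k => by
    rcases eq_or_ne k j with rfl | hk
    · rw [hAj]; exact ⟨hS, hScard⟩
    · rw [hAk k hk]; exact ⟨hIccsub k, hIcccard⟩) i
  have h2 := hedge (fun _ => Icc 1 s) (fun k => ⟨hIccsub k, hIcccard⟩) i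
  rw [← Finset.add_sum_erase _ _ (Finset.mem_univ j)] at h1 h2
  have hrest : ∑ k ∈ univ.erase j, ((A k).filter (fun x => (φ (k, x)).1 = i)).card
      = ∑ k ∈ univ.erase j, ((Icc 1 s).filter (fun x => (φ (k, x)).1 = i)).card :=
    Finset.sum_congr rfl fun k hk => by rw [hAk k (Finset.ne_of_mem_erase hk)]
  rw [hAj] at h1
  rw [hrest] at h1
  unfold colCnt
  omega

lemma aux_mono {d s : ℕ} {r : Fin d → ℕ} {φ : Fin d × ℕ → Fin d × ℕ}
    (hs : 1 ≤ s) (hr : ∀ i, s ≤ r i)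
    (hedge : ∀ A : Fin d → Finset ℕ, (∀ j, A j ⊆ Icc 1 (r j) ∧ (A j).card = s) →
      ∀ i, ∑ j, ((A j).filter (fun x => (φ (j, x)).1 = i)).card = s)
    (j : Fin d) (hj : s < r j) {x y : ℕ} (hx : x ∈ Icc 1 (r j)) (hy : y ∈ Icc 1 (r j)) :
    (φ (j, x)).1 = (φ (j, y)).1 := by
  classical
  by_contra hne
  have hxy : x ≠ y := fun h => hne (h ▸ rfl)
  have hpair : ({x, y} : Finset ℕ).card ≤ 2 :=
    (Finset.card_insert_le _ _).trans (by simp)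
  have hIcc : (Icc 1 (r j)).card = r j := by rw [Nat.card_Icc]; omega
  have hle : s - 1 ≤ ((Icc 1 (r j)) \ {x, y}).card := by
    have := Finset.le_card_sdiff ({x, y} : Finset ℕ) (Icc 1 (r j))
    omega
  obtain ⟨T, hT, hTcard⟩ := Finset.exists_subset_card_eq hle
  have hxT : x ∉ T := fun h => by
    have := hT h; rw [Finset.mem_sdiff] at this
    exact this.2 (by simp)
  have hyT : y ∉ T := fun h => by
    have := hT h; rw [Finset.mem_sdiff] at this
    exact this.2 (by simp)
  have hTsub : T ⊆ Icc 1 (r j) := hT.trans (Finset.sdiff_subset)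
  have hcardx : (insert x T).card = s := by
    rw [Finset.card_insert_of_notMem hxT, hTcard]; omega
  have hcardy : (insert y T).card = s := by
    rw [Finset.card_insert_of_notMem hyT, hTcard]; omega
  have h1 := aux_exchange hr hedge j (insert x T)
    (Finset.insert_subset hx hTsub) hcardx ((φ (j, x)).1)
  have h2 := aux_exchange hr hedge j (insert y T)
    (Finset.insert_subset hy hTsub) hcardy ((φ (j, x)).1)
  rw [Finset.filter_insert, if_pos rfl] at h1
  rw [Finset.filter_insert, if_neg (fun h => hne h.symm)] at h2
  have hxTf : x ∉ T.filter (fun t => (φ (j, t)).1 = (φ (j, x)).1) :=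
    fun h => hxT (Finset.mem_filter.1 h).1
  rw [Finset.card_insert_of_notMem hxTf] at h1
  omega


lemma aux_edge {d s : ℕ} {n r : Fin d → ℕ} {φ : Fin d × ℕ → Fin d × ℕ}
    (hinj : Set.InjOn φ {v : Fin d × ℕ | v.2 ∈ Icc 1 (r v.1)})
    (hcopy : ∀ A : Fin d → Finset ℕ, (∀ i, A i ⊆ Icc 1 (r i) ∧ (A i).card = s) →
      ((edgeOf A).image φ : Finset (Fin d × ℕ)) ∈ tensorEdges d {fun _ => s} n) :
    ∀ A : Fin d → Finset ℕ, (∀ j, A j ⊆ Icc 1 (r j) ∧ (A j).card = s) →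
      ∀ i, ∑ j, ((A j).filter (fun x => (φ (j, x)).1 = i)).card = s := by
  intro A hA i
  obtain ⟨s', hs', A', hA', hW⟩ := hcopy A hA
  rw [Finset.mem_singleton] at hs'
  subst hs'
  calc ∑ j, ((A j).filter (fun x => (φ (j, x)).1 = i)).card
      = (((edgeOf A).image φ).filter (fun v => v.1 = i)).card :=
        (count_image_edge hinj A (fun j => (hA j).1) i).symm
    _ = ((edgeOf A').filter (fun v => v.1 = i)).card := by rw [hW]
    _ = ((A' i).image (fun x => (i, x))).card := by rw [filter_edgeOf]
    _ = (A' i).card := Finset.card_image_of_injective _ (fun a b h => (Prod.mk.injEq .. ▸ h).2)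
    _ = s := (hA' i).2


/-- Uncolored copies of ⊗_s(r) in ⊗_s(n) for constant uniformity s ≥ 1 come from
permutations of the parts: if φ is an injection of the vertex set ⋃_i [r_i] × {i} of
the pattern ⊗_s(r) into ⊗_s(n) mapping every edge of the pattern to an edge of the
host, then there is a permutation σ of [d] such that the image hypergraph is a colored
copy of ⊗_s(r ∘ σ⁻¹): its color-i part has size r_{σ⁻¹(i)} and its edges are exactly
the subsets of its vertex set meeting every color class in s vertices. -/
theorem uncolored_copy_is_permuted_colored_copy (d s : ℕ) (hd : 1 ≤ d) (hs : 1 ≤ s)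
    (n r : Fin d → ℕ) (hn : ∀ i, s ≤ n i) (hr : ∀ i, s ≤ r i)
    (φ : Fin d × ℕ → Fin d × ℕ)
    (hinj : Set.InjOn φ {v : Fin d × ℕ | v.2 ∈ Icc 1 (r v.1)})
    (hcopy : ∀ A : Fin d → Finset ℕ, (∀ i, A i ⊆ Icc 1 (r i) ∧ (A i).card = s) →
      ((edgeOf A).image φ : Finset (Fin d × ℕ)) ∈
        tensorEdges d {fun _ => s} n) :
    ∃ σ : Equiv.Perm (Fin d),
      (∀ i : Fin d,
        (((edgeOf fun i' => Icc 1 (r i')).image φ).filter fun v => v.1 = i).card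
          = r (σ.symm i)) ∧
      ∀ W : Finset (Fin d × ℕ),
        (∃ A : Fin d → Finset ℕ, (∀ i, A i ⊆ Icc 1 (r i) ∧ (A i).card = s) ∧
            W = (edgeOf A).image φ) ↔
          (W ⊆ (edgeOf fun i' => Icc 1 (r i')).image φ ∧
            ∀ i : Fin d, (W.filter fun v => v.1 = i).card = s) := by
  classical
  have hedge := aux_edge hinj hcopy
  have hIccsub : ∀ k : Fin d, Icc 1 s ⊆ Icc 1 (r k) :=
    fun k => Finset.Icc_subset_Icc le_rfl (hr k)
  have hIcccard : ∀ m : ℕ, (Icc 1 m).card = m := fun m => by rw [Nat.card_Icc]; omega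
  have h1mem : ∀ j : Fin d, (1 : ℕ) ∈ Icc 1 (r j) :=
    fun j => Finset.mem_Icc.2 ⟨le_rfl, hs.trans (hr j)⟩
  have hmono : ∀ j, s < r j → ∀ x ∈ Icc 1 (r j), (φ (j, x)).1 = (φ (j, 1)).1 :=
    fun j hj x hx => aux_mono hs hr hedge j hj hx (h1mem j)
  -- facts about colCnt with m = s ("g") and m = r j ("cnt")
  have hg_colsum : ∀ i, ∑ j, colCnt φ s j i = s :=
    fun i => hedge (fun _ => Icc 1 s) (fun k => ⟨hIccsub k, hIcccard s⟩) i
  have hg_big : ∀ j, s < r j → ∀ i,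
      colCnt φ s j i = if i = (φ (j, 1)).1 then s else 0 := by
    intro j hj i
    unfold colCnt
    split
    · next h =>
      rw [Finset.filter_true_of_mem, hIcccard s]
      intro x hx
      rw [hmono j hj x (hIccsub j hx), h]
    · next h =>
      rw [Finset.filter_false_of_mem, Finset.card_empty]
      intro x hx
      rw [hmono j hj x (hIccsub j hx)]
      exact fun hh => h hh.symm
  have hcnt_big : ∀ j, s < r j → ∀ i,
      colCnt φ (r j) j i = if i = (φ (j, 1)).1 then r j else 0 := by
    intro j hj i
    unfold colCnt
    split
    · next h =>
      rw [Finset.filter_true_of_mem, hIcccard]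
      intro x hx
      rw [hmono j hj x hx, h]
    · next h =>
      rw [Finset.filter_false_of_mem, Finset.card_empty]
      intro x hx
      rw [hmono j hj x hx]
      exact fun hh => h hh.symm
  have hcnt_small : ∀ j, ¬ s < r j → colCnt φ (r j) j = colCnt φ s j := by
    intro j hj
    have : r j = s := le_antisymm (not_lt.1 hj) (hr j)
    rw [this]
  have hinj_cj : ∀ j k, s < r j → s < r k → (φ (j, 1)).1 = (φ (k, 1)).1 → j = k := by
    intro j k hj hk h
    by_contra hne
    have h1 : colCnt φ s j ((φ (j, 1)).1) = s := by rw [hg_big j hj, if_pos rfl]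
    have h2 : colCnt φ s k ((φ (j, 1)).1) = s := by rw [hg_big k hk, if_pos h]
    have hle : ∀ c : Fin d, colCnt φ s j c + colCnt φ s k c ≤ ∑ m, colCnt φ s m c := by
      intro c
      have hsub := Finset.sum_le_sum_of_subset
        (f := fun m => colCnt φ s m c) (Finset.subset_univ ({j, k} : Finset (Fin d)))
      rw [Finset.sum_pair hne] at hsub
      exact hsub
    have hle' := hle ((φ (j, 1)).1)
    rw [hg_colsum ((φ (j, 1)).1), h1, h2] at hle'
    omega
  have hzero : ∀ j, s < r j → ∀ m, m ≠ j → colCnt φ s m ((φ (j, 1)).1) = 0 := by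
    intro j hj m hm
    have h1 : colCnt φ s j ((φ (j, 1)).1) = s := by rw [hg_big j hj, if_pos rfl]
    have hsum := hg_colsum ((φ (j, 1)).1)
    rw [← Finset.add_sum_erase _ _ (Finset.mem_univ j), h1] at hsum
    have hz : ∑ k ∈ univ.erase j, colCnt φ s k ((φ (j, 1)).1) = 0 := by omega
    exact (Finset.sum_eq_zero_iff.1 hz) m (Finset.mem_erase.2 ⟨hm, Finset.mem_univ m⟩)
  have hzero_cnt : ∀ j, s < r j → ∀ m, m ≠ j → colCnt φ (r m) m ((φ (j, 1)).1) = 0 := by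
    intro j hj m hm
    by_cases hmbig : s < r m
    · rw [hcnt_big m hmbig, if_neg]
      intro h
      exact hm (hinj_cj m j hmbig hj h.symm)
    · rw [hcnt_small m hmbig]
      exact hzero j hj m hm
  have hΦ : ∀ i, (((edgeOf fun i' => Icc 1 (r i')).image φ).filter fun v => v.1 = i).card
      = ∑ j, colCnt φ (r j) j i :=
    fun i => count_image_edge hinj _ (fun j => Finset.Subset.refl _) i
  -- construction of the permutation
  set P : Fin d → Prop := fun j => s < r j with hP
  set Qp : Fin d → Prop := fun i => ∃ j, s < r j ∧ (φ (j, 1)).1 = i with hQp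
  let e1 : {j // P j} ≃ {i // Qp i} :=
    Equiv.ofBijective (fun j => ⟨(φ (j.1, 1)).1, j.1, j.2, rfl⟩)
      ⟨fun a b hab => Subtype.ext (hinj_cj a.1 b.1 a.2 b.2 (congrArg Subtype.val hab)),
       fun i => by
        obtain ⟨i, j, hj, hji⟩ := i
        exact ⟨⟨j, hj⟩, Subtype.ext hji⟩⟩
  have hcards : Fintype.card {j // ¬ P j} = Fintype.card {i // ¬ Qp i} := by
    rw [Fintype.card_subtype_compl, Fintype.card_subtype_compl, Fintype.card_congr e1]
  let e2 : {j // ¬ P j} ≃ {i // ¬ Qp i} := Fintype.equivOfCardEq hcards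
  let σ : Equiv.Perm (Fin d) :=
    ((Equiv.sumCompl P).symm.trans ((e1.sumCongr e2).trans (Equiv.sumCompl Qp)))
  have hσ_big : ∀ j, ∀ h : P j, σ j = (φ (j, 1)).1 := by
    intro j h
    show (Equiv.sumCompl Qp) ((e1.sumCongr e2) ((Equiv.sumCompl P).symm j)) = _
    rw [Equiv.sumCompl_symm_apply_of_pos (p := P) h]
    rfl
  have hσ_small : ∀ j, ∀ h : ¬ P j, ¬ Qp (σ j) := by
    intro j h
    show ¬ Qp ((Equiv.sumCompl Qp) ((e1.sumCongr e2) ((Equiv.sumCompl P).symm j)))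
    rw [Equiv.sumCompl_symm_apply_of_neg (p := P) h]
    exact (e2 ⟨j, h⟩).2
  refine ⟨σ, ?_, ?_⟩
  · intro i
    rw [hΦ i]
    by_cases hQ : Qp i
    · obtain ⟨j, hj, hji⟩ := hQ
      have hσj : σ j = i := (hσ_big j hj).trans hji
      have hsymm : σ.symm i = j := by rw [← hσj]; exact σ.symm_apply_apply j
      rw [hsymm]
      rw [Finset.sum_eq_single j]
      · rw [hcnt_big j hj, if_pos hji.symm]
      · intro m _ hm
        rw [← hji]
        exact hzero_cnt j hj m hm
      · intro h
        exact absurd (Finset.mem_univ j) h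
    · have hP' : ¬ P (σ.symm i) := by
        intro h
        exact hQ ⟨σ.symm i, h, by rw [← hσ_big _ h]; exact σ.apply_symm_apply i⟩
      have hrs : r (σ.symm i) = s := le_antisymm (not_lt.1 hP') (hr _)
      rw [hrs, ← hg_colsum i]
      refine Finset.sum_congr rfl fun m _ => ?_
      by_cases hmbig : s < r m
      · have hne : i ≠ (φ (m, 1)).1 := fun h => hQ ⟨m, hmbig, h.symm⟩
        rw [hcnt_big m hmbig, hg_big m hmbig, if_neg hne, if_neg hne]
      · rw [hcnt_small m hmbig]
  · intro W
    constructor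
    · rintro ⟨A, hA, rfl⟩
      refine ⟨Finset.image_subset_image (edgeOf_subset fun i => (hA i).1), ?_⟩
      intro i
      obtain ⟨s', hs', A', hA', hW⟩ := hcopy A hA
      rw [Finset.mem_singleton] at hs'
      subst hs'
      rw [hW, filter_edgeOf,
        Finset.card_image_of_injective _ (fun a b h => (Prod.mk.injEq .. ▸ h).2)]
      exact (hA' i).2
    · rintro ⟨hWsub, hWcnt⟩
      set A : Fin d → Finset ℕ := fun j => (Icc 1 (r j)).filter (fun x => φ (j, x) ∈ W)
        with hAdef
      have hAsub : ∀ j, A j ⊆ Icc 1 (r j) := fun j => Finset.filter_subset _ _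
      have hEW : (edgeOf A).image φ = W := by
        apply Finset.Subset.antisymm
        · intro w hw
          obtain ⟨v, hv, rfl⟩ := Finset.mem_image.1 hw
          have hvA := mem_edgeOf.1 hv
          rw [hAdef] at hvA
          exact (Finset.mem_filter.1 hvA).2
        · intro w hw
          obtain ⟨v, hv, rfl⟩ := Finset.mem_image.1 (hWsub hw)
          refine Finset.mem_image.2 ⟨v, mem_edgeOf.2 ?_, rfl⟩
          rw [hAdef]
          exact Finset.mem_filter.2 ⟨mem_edgeOf.1 hv, hw⟩
      have htsum : ∀ i, ∑ j, ((A j).filter (fun x => (φ (j, x)).1 = i)).card = s := by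
        intro i
        rw [← count_image_edge hinj A hAsub i, hEW]
        exact hWcnt i
      have ht_le_cnt : ∀ m i,
          ((A m).filter (fun x => (φ (m, x)).1 = i)).card ≤ colCnt φ (r m) m i :=
        fun m i => Finset.card_le_card (Finset.filter_subset_filter _ (hAsub m))
      have hrowA : ∀ m, (A m).card = ∑ i, ((A m).filter (fun x => (φ (m, x)).1 = i)).card :=
        fun m => Finset.card_eq_sum_card_fiberwise (fun x _ => Finset.mem_univ _)
      have hle : ∀ m, (A m).card ≤ s := by
        intro m
        by_cases hmbig : s < r m
        · have h0 : ∀ i ∈ (univ : Finset (Fin d)), i ≠ (φ (m, 1)).1 →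
              ((A m).filter (fun x => (φ (m, x)).1 = i)).card = 0 := by
            intro i _ hi
            have h1 := ht_le_cnt m i
            rw [hcnt_big m hmbig, if_neg hi] at h1
            omega
          have h2 : ∑ i, ((A m).filter (fun x => (φ (m, x)).1 = i)).card
              = ((A m).filter (fun x => (φ (m, x)).1 = (φ (m, 1)).1)).card :=
            Finset.sum_eq_single _ h0 (fun h => absurd (Finset.mem_univ _) h)
          have hkey : ∀ c : Fin d,
              ((A m).filter (fun x => (φ (m, x)).1 = c)).card ≤ s := by
            intro c
            calc ((A m).filter (fun x => (φ (m, x)).1 = c)).card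
                ≤ ∑ k, ((A k).filter (fun x => (φ (k, x)).1 = c)).card :=
                  Finset.single_le_sum
                    (f := fun k => ((A k).filter (fun x => (φ (k, x)).1 = c)).card)
                    (fun _ _ => Nat.zero_le _) (Finset.mem_univ m)
              _ = s := htsum c
          rw [hrowA m, h2]
          exact hkey _
        · have := Finset.card_le_card (hAsub m)
          rw [hIcccard] at this
          omega
      have htotal : ∑ m, (A m).card = ∑ _m : Fin d, s := by
        calc ∑ m, (A m).card
            = ∑ m, ∑ i, ((A m).filter (fun x => (φ (m, x)).1 = i)).card :=
              Finset.sum_congr rfl (fun m _ => hrowA m)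
          _ = ∑ i, ∑ m, ((A m).filter (fun x => (φ (m, x)).1 = i)).card := Finset.sum_comm
          _ = ∑ _i : Fin d, s := Finset.sum_congr rfl (fun i _ => htsum i)
      have hcards' := (Finset.sum_eq_sum_iff_of_le (fun m _ => hle m)).1 htotal
      exact ⟨A, fun j => ⟨hAsub j, hcards' j (Finset.mem_univ j)⟩, hEW.symm⟩
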